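/- Let w₁, w₂ be nonzero complex numbers with |w₁| > |w₂| and let J > 0. Consider the input uniformly distributed over the four points √(J/2)·e^{−i·arg(w₁)}·s for s ∈ {1+i, 1−i, −1+i, −1−i}, and let I₁ and I₂ denote the uniform-4-point-input mutual informations of the per-component one-bit receivers with gains w₁ and w₂, respectively. Then I₁ − I₂ ≥ 2·( h(Q(|w₂|·√(J/2))) − h(Q(|w₁|·√(J/2))) ) > 0. (Appendix: rotated QPSK achieves a positive secrecy rate for the complex Gaussian wiretap channel with one-bit ADCs at both receivers whenever |w₁| > |w₂|.) -/

import Mathlib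

/-!
Rotating the constellation by `-arg w₁` makes the legitimate gain real, so each of its one-bit
outputs sees `±‖w₁‖√(J/2)` independently of the other, the output is uniform and
`I₁ = log 4 - 2 h(Q(‖w₁‖√(J/2)))`. For any gain `B = p + iq` the conditional output entropy is
`h(Q(p - q)) + h(Q(p + q))` and the output entropy is at most `log 4`; since
`(p - q)² + (p + q)² = 2|B|²`, convexity of `u ↦ h(Q(√u))` on `[0, ∞)` gives
`I(B) ≤ log 4 - 2 h(Q(|B|))`. That convexity amounts to `L(x) φ(x) / x` decreasing, where
`L = log ((1 - Q) / Q)`, i.e. to `x φ ≤ L Q (1 - Q) (x² + 1)`. Using `L ≥ 2 (1 - 2Q)`, this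
follows from Taylor bounds on `Q` for `x ≤ 1` and from the Mills-ratio bound
`x φ ≤ (x² + 1) Q` for `x ≥ 1`. Finally `h ∘ Q` is strictly decreasing on `[0, ∞)`.
-/

open MeasureTheory Real Filter

/-- The standard Gaussian tail function `Q(x) = ∫_x^∞ (2π)^{-1/2} e^{-u²/2} du`. -/
noncomputable def gaussQ (x : ℝ) : ℝ :=
  ∫ u in Set.Ioi x, (Real.sqrt (2 * Real.pi))⁻¹ * Real.exp (-u ^ 2 / 2)

/-- `η(t) = -t log t` (with `η(0) = 0`, automatic since `Real.log 0 = 0`). -/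
noncomputable def eta (t : ℝ) : ℝ := -t * Real.log t

/-- The binary entropy function `h(p) = -p log p - (1-p) log (1-p)`. -/
noncomputable def binEnt (p : ℝ) : ℝ := eta p + eta (1 - p)

/-- Sign value of a Boolean: `true ↦ +1`, `false ↦ -1`. -/
noncomputable def sgnb (b : Bool) : ℝ := if b then 1 else -1

/-- Transition probability of the complex Gaussian channel with gain `w` followed by
per-component one-bit ADCs: `P((s_R,s_I)|x) = Q(-s_R·Re(wx))·Q(-s_I·Im(wx))`. -/
noncomputable def p1bitC (w x : ℂ) (s : Bool × Bool) : ℝ :=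
  gaussQ (-(sgnb s.1) * (w * x).re) * gaussQ (-(sgnb s.2) * (w * x).im)

/-- Mutual information of the per-component one-bit receiver with gain `w` for an
input uniformly distributed over the four points `pts s`, `s : Bool × Bool`. -/
noncomputable def miUnif4 (w : ℂ) (pts : Bool × Bool → ℂ) : ℝ :=
  ∑ y : Bool × Bool,
    (eta ((1 / 4) * ∑ s : Bool × Bool, p1bitC w (pts s) y)
      - (1 / 4) * ∑ s : Bool × Bool, eta (p1bitC w (pts s) y))

/-- The QPSK constellation of power `J` rotated by `-arg w₁`:
the four points `√(J/2)·e^{-i·arg(w₁)}·(±1 ± i)`. -/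
noncomputable def qpskPts (w₁ : ℂ) (J : ℝ) (s : Bool × Bool) : ℂ :=
  (Real.sqrt (J / 2) : ℂ) * Complex.exp (-(Complex.arg w₁ : ℂ) * Complex.I)
    * ((sgnb s.1 : ℂ) + (sgnb s.2 : ℂ) * Complex.I)

open Set ProbabilityTheory

local notation "φ" => gaussianPDFReal 0 1

lemma gaussianPDFReal_zero_one_apply (x : ℝ) :
    φ x = (√(2 * π))⁻¹ * exp (-x ^ 2 / 2) := by
  simp [gaussianPDFReal]

lemma gaussianPDFReal_zero_one_neg (x : ℝ) : φ (-x) = φ x := by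
  simp only [gaussianPDFReal_zero_one_apply, neg_sq]

lemma sq_gaussianPDFReal_zero_one_zero : φ 0 ^ 2 = (2 * π)⁻¹ := by
  rw [gaussianPDFReal_zero_one_apply, ← sqrt_inv, zero_pow two_ne_zero, neg_zero, zero_div,
    exp_zero, mul_one, sq_sqrt (by positivity)]

lemma hasDerivAt_gaussianPDFReal_zero_one (x : ℝ) : HasDerivAt φ (-x * φ x) x := by
  have h : HasDerivAt (fun y : ℝ ↦ -y ^ 2 / 2) (-x) x :=
    ((hasDerivAt_pow 2 x).neg.div_const 2).congr_deriv (by ring)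
  rw [show φ = fun y ↦ (√(2 * π))⁻¹ * exp (-y ^ 2 / 2) from funext gaussianPDFReal_zero_one_apply]
  exact (h.exp.const_mul _).congr_deriv (by ring)

lemma continuous_gaussianPDFReal_zero_one : Continuous φ :=
  continuous_iff_continuousAt.2 fun x ↦ (hasDerivAt_gaussianPDFReal_zero_one x).continuousAt

lemma gaussQ_eq_integral (x : ℝ) : gaussQ x = ∫ u in Ioi x, φ u := by
  simp only [gaussQ, gaussianPDFReal_zero_one_apply]

lemma gaussQ_add_gaussQ_neg (x : ℝ) : gaussQ x + gaussQ (-x) = 1 := by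
  have hneg : gaussQ (-x) = ∫ u in Iic x, φ u := by
    calc gaussQ (-x) = ∫ u in Ioi (-x), φ (-u) := by
          simp only [gaussQ_eq_integral, gaussianPDFReal_zero_one_neg]
      _ = ∫ u in Iic x, φ u := by rw [integral_comp_neg_Ioi, neg_neg]
  rw [gaussQ_eq_integral, hneg, add_comm, intervalIntegral.integral_Iic_add_Ioi
    (integrable_gaussianPDFReal 0 1).integrableOn (integrable_gaussianPDFReal 0 1).integrableOn,
    integral_gaussianPDFReal_eq_one 0 one_ne_zero]

lemma gaussQ_pos (x : ℝ) : 0 < gaussQ x := by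
  rw [gaussQ_eq_integral, setIntegral_pos_iff_support_of_nonneg_ae
    (ae_of_all _ (gaussianPDFReal_nonneg 0 1)) (integrable_gaussianPDFReal 0 1).integrableOn]
  simp [Function.support_eq_univ fun u ↦ (gaussianPDFReal_pos 0 1 u one_ne_zero).ne']

lemma one_sub_gaussQ (x : ℝ) : 1 - gaussQ x = gaussQ (-x) := by
  linarith [gaussQ_add_gaussQ_neg x]

lemma gaussQ_lt_one (x : ℝ) : gaussQ x < 1 :=
  sub_pos.1 (one_sub_gaussQ x ▸ gaussQ_pos (-x))

lemma gaussQ_zero : gaussQ 0 = 1 / 2 := by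
  linarith [neg_zero (G := ℝ) ▸ gaussQ_add_gaussQ_neg 0]

lemma gaussQ_eq_half_sub_integral (x : ℝ) : gaussQ x = 1 / 2 - ∫ u in (0 : ℝ)..x, φ u := by
  rw [← gaussQ_zero, eq_sub_iff_add_eq, gaussQ_eq_integral, gaussQ_eq_integral, add_comm,
    intervalIntegral.integral_interval_add_Ioi
      (integrable_gaussianPDFReal 0 1).integrableOn (integrable_gaussianPDFReal 0 1).integrableOn]

lemma hasDerivAt_gaussQ (x : ℝ) : HasDerivAt gaussQ (-φ x) x := by
  have h := intervalIntegral.integral_hasDerivAt_right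
    (integrable_gaussianPDFReal 0 1).intervalIntegrable
    (continuous_gaussianPDFReal_zero_one.stronglyMeasurableAtFilter _ _)
    continuous_gaussianPDFReal_zero_one.continuousAt (a := 0) (b := x)
  rw [show gaussQ = _ from funext gaussQ_eq_half_sub_integral]
  exact (h.const_sub _)

lemma continuous_gaussQ : Continuous gaussQ :=
  continuous_iff_continuousAt.2 fun x ↦ (hasDerivAt_gaussQ x).continuousAt

lemma strictAnti_gaussQ : StrictAnti gaussQ :=
  strictAnti_of_hasDerivAt_neg hasDerivAt_gaussQ
    fun x ↦ neg_neg_of_pos (gaussianPDFReal_pos 0 1 x one_ne_zero)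

lemma tendsto_gaussQ_atTop : Tendsto gaussQ atTop (nhds 0) := by
  have h := intervalIntegral_tendsto_integral_Ioi (0 : ℝ)
    (integrable_gaussianPDFReal 0 1).integrableOn tendsto_id
  rw [← gaussQ_eq_integral, gaussQ_zero] at h
  simpa only [sub_self, id, ← gaussQ_eq_half_sub_integral] using h.const_sub (1 / 2 : ℝ)

lemma gaussQ_le_half {x : ℝ} (hx : 0 ≤ x) : gaussQ x ≤ 1 / 2 :=
  gaussQ_zero ▸ strictAnti_gaussQ.antitone hx

lemma monotoneOn_Ici_of_hasDerivAt {f f' : ℝ → ℝ} {a : ℝ} (hf : ∀ x, HasDerivAt f (f' x) x)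
    (hf' : ∀ x, a ≤ x → 0 ≤ f' x) : MonotoneOn f (Ici a) :=
  monotoneOn_of_hasDerivWithinAt_nonneg (convex_Ici a)
    (fun x _ ↦ (hf x).continuousAt.continuousWithinAt) (fun x _ ↦ (hf x).hasDerivWithinAt)
    fun x hx ↦ hf' x (interior_subset hx)

lemma exp_neg_le_one_sub_add_sq_div_two {t : ℝ} (ht : 0 ≤ t) :
    exp (-t) ≤ 1 - t + t ^ 2 / 2 := by
  have hf : ∀ y, HasDerivAt (fun y ↦ 1 - y + y ^ 2 / 2 - exp (-y)) (-1 + y + exp (-y)) y :=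
    fun y ↦ ((((hasDerivAt_id y).const_sub 1).add ((hasDerivAt_pow 2 y).div_const 2)).sub
      (hasDerivAt_neg y).exp).congr_deriv (by push_cast; ring)
  simpa using monotoneOn_Ici_of_hasDerivAt hf (fun y _ ↦ by linarith [add_one_le_exp (-y)])
    self_mem_Ici ht ht

lemma one_sub_add_sq_sub_cube_le_exp_neg {t : ℝ} (ht : 0 ≤ t) :
    1 - t + t ^ 2 / 2 - t ^ 3 / 6 ≤ exp (-t) := by
  have hf : ∀ y, HasDerivAt (fun y ↦ exp (-y) - (1 - y + y ^ 2 / 2 - y ^ 3 / 6))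
      (1 - y + y ^ 2 / 2 - exp (-y)) y :=
    fun y ↦ ((hasDerivAt_neg y).exp.sub ((((hasDerivAt_id y).const_sub 1).add
      ((hasDerivAt_pow 2 y).div_const 2)).sub ((hasDerivAt_pow 3 y).div_const 6))).congr_deriv
      (by push_cast; ring)
  simpa using monotoneOn_Ici_of_hasDerivAt hf
    (fun y hy ↦ sub_nonneg.2 (exp_neg_le_one_sub_add_sq_div_two hy)) self_mem_Ici ht ht

lemma gaussianPDFReal_zero_one_eq_mul_exp (x : ℝ) : φ x = φ 0 * exp (-x ^ 2 / 2) := by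
  simp [gaussianPDFReal_zero_one_apply]

lemma gaussQ_le_half_sub_taylor {x : ℝ} (hx : 0 ≤ x) :
    gaussQ x ≤ 1 / 2 - φ 0 * (x - x ^ 3 / 6 + x ^ 5 / 40 - x ^ 7 / 336) := by
  have hf : ∀ y, HasDerivAt (fun y ↦ 1 / 2 - φ 0 * (y - y ^ 3 / 6 + y ^ 5 / 40 - y ^ 7 / 336)
      - gaussQ y) (φ y - φ 0 * (1 - y ^ 2 / 2 + y ^ 4 / 8 - y ^ 6 / 48)) y := fun y ↦
    ((((((hasDerivAt_id y).sub ((hasDerivAt_pow 3 y).div_const 6)).add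
      ((hasDerivAt_pow 5 y).div_const 40)).sub ((hasDerivAt_pow 7 y).div_const 336)).const_mul
      (φ 0)).const_sub (1 / 2) |>.sub (hasDerivAt_gaussQ y)).congr_deriv (by push_cast; ring)
  have hf' : ∀ y, 0 ≤ y → 0 ≤ φ y - φ 0 * (1 - y ^ 2 / 2 + y ^ 4 / 8 - y ^ 6 / 48) := by
    intro y _
    have := one_sub_add_sq_sub_cube_le_exp_neg (t := y ^ 2 / 2) (by positivity)
    rw [gaussianPDFReal_zero_one_eq_mul_exp y, neg_div, ← mul_sub]
    refine mul_nonneg (gaussianPDFReal_nonneg 0 1 0) ?_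
    linarith
  simpa [gaussQ_zero] using monotoneOn_Ici_of_hasDerivAt hf hf' self_mem_Ici hx hx

lemma half_sub_taylor_le_gaussQ {x : ℝ} (hx : 0 ≤ x) :
    1 / 2 - φ 0 * (x - x ^ 3 / 6 + x ^ 5 / 40) ≤ gaussQ x := by
  have hf : ∀ y, HasDerivAt (fun y ↦ gaussQ y + φ 0 * (y - y ^ 3 / 6 + y ^ 5 / 40))
      (φ 0 * (1 - y ^ 2 / 2 + y ^ 4 / 8) - φ y) y := fun y ↦
    ((hasDerivAt_gaussQ y).add ((((hasDerivAt_id y).sub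
      ((hasDerivAt_pow 3 y).div_const 6)).add ((hasDerivAt_pow 5 y).div_const 40)).const_mul
      (φ 0))).congr_deriv (by push_cast; ring)
  have hf' : ∀ y, 0 ≤ y → 0 ≤ φ 0 * (1 - y ^ 2 / 2 + y ^ 4 / 8) - φ y := by
    intro y _
    have := exp_neg_le_one_sub_add_sq_div_two (t := y ^ 2 / 2) (by positivity)
    rw [gaussianPDFReal_zero_one_eq_mul_exp y, neg_div, ← mul_sub]
    refine mul_nonneg (gaussianPDFReal_nonneg 0 1 0) ?_
    linarith
  simpa [gaussQ_zero] using monotoneOn_Ici_of_hasDerivAt hf hf' self_mem_Ici hx hx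

lemma gaussQ_one_le : gaussQ 1 ≤ 1 / 6 := by
  have hsq : 1 / 6.3 ≤ φ 0 ^ 2 := by
    rw [sq_gaussianPDFReal_zero_one_zero, one_div]
    exact inv_anti₀ (by positivity) (by linarith [pi_lt_d2])
  have hφ0 : 0.398 ≤ φ 0 := by nlinarith [gaussianPDFReal_nonneg 0 1 0]
  linarith [gaussQ_le_half_sub_taylor zero_le_one]

lemma mul_gaussianPDFReal_le_gaussQ_mul (x : ℝ) : x * φ x ≤ gaussQ x * (x ^ 2 + 1) := by
  set M : ℝ → ℝ := fun y ↦ gaussQ y - y * φ y / (y ^ 2 + 1)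
  have hM : ∀ y, HasDerivAt M (-2 * φ y / (y ^ 2 + 1) ^ 2) y := fun y ↦
    ((hasDerivAt_gaussQ y).sub (((hasDerivAt_id' y).mul (hasDerivAt_gaussianPDFReal_zero_one y)).div
      ((hasDerivAt_pow 2 y).add_const 1) (by positivity))).congr_deriv
      (by simp only [Pi.mul_apply]; rw [gaussianPDFReal_zero_one_eq_mul_exp y]; field_simp; ring)
  have hanti : StrictAnti M := strictAnti_of_hasDerivAt_neg hM fun y ↦
    div_neg_of_neg_of_pos (by linarith [gaussianPDFReal_pos 0 1 y one_ne_zero]) (by positivity)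
  have hratio : Tendsto (fun y ↦ y * φ y / (y ^ 2 + 1)) atTop (nhds 0) := by
    refine tendsto_of_tendsto_of_tendsto_of_le_of_le' tendsto_const_nhds
      ((tendsto_const_nhds (x := φ 0)).div_atTop tendsto_id) ?_ ?_
    · filter_upwards [eventually_ge_atTop 0] with y hy
      have := gaussianPDFReal_nonneg 0 1 y
      positivity
    · filter_upwards [eventually_gt_atTop 0] with y hy
      have hφ : φ y ≤ φ 0 := by
        rw [gaussianPDFReal_zero_one_eq_mul_exp y]
        exact mul_le_of_le_one_right (gaussianPDFReal_nonneg 0 1 0)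
          (exp_le_one_iff.2 (by nlinarith))
      show y * φ y / (y ^ 2 + 1) ≤ φ 0 / y
      rw [div_le_div_iff₀ (by positivity) hy]
      nlinarith [gaussianPDFReal_nonneg 0 1 y]
  have hlim : Tendsto M atTop (nhds 0) := by
    simpa using tendsto_gaussQ_atTop.sub hratio
  have hMx : 0 ≤ M x :=
    le_of_tendsto hlim ((eventually_ge_atTop x).mono fun y hy ↦ hanti.antitone hy)
  have := (div_le_iff₀ (by positivity : (0 : ℝ) < x ^ 2 + 1)).1 (sub_nonneg.1 hMx)
  linarith

lemma taylor_poly_ineq {x : ℝ} (h0 : 0 ≤ x) (h1 : x ≤ 1) :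
    x * (1 - x ^ 2 / 2 + x ^ 4 / 8) + 0.637 * (x - x ^ 3 / 6 + x ^ 5 / 40) ^ 3 * (x ^ 2 + 1)
      ≤ (x - x ^ 3 / 6 + x ^ 5 / 40 - x ^ 7 / 336) * (x ^ 2 + 1) := by
  have hpoly_sq : ∀ t : ℝ, 0 ≤ t → t ≤ 1 → 0.637 * (1 - t / 6 + t ^ 2 / 40) ^ 3 * (1 + t)
      ≤ 4 / 3 - 4 / 15 * t + 37 / 1680 * t ^ 2 - t ^ 3 / 336 := fun t h0 h1 ↦ by
    nlinarith [sq_nonneg t, sq_nonneg (1 - t), mul_nonneg h0 (sub_nonneg.2 h1),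
      pow_le_one₀ h0 h1 (n := 2), mul_nonneg (mul_nonneg h0 h0) h0,
      sq_nonneg (t * (1 - t)), mul_nonneg (mul_nonneg h0 h0) (sub_nonneg.2 h1)]
  have h := mul_le_mul_of_nonneg_left (hpoly_sq (x ^ 2) (by positivity) (by nlinarith))
    (pow_nonneg h0 3)
  nlinarith [h]

lemma mul_gaussianPDFReal_le_of_le_one {x : ℝ} (hx0 : 0 ≤ x) (hx1 : x ≤ 1) :
    x * φ x ≤ 2 * (1 - 2 * gaussQ x) * (gaussQ x * (1 - gaussQ x)) * (x ^ 2 + 1) := by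
  set c := φ 0
  set I := 1 / 2 - gaussQ x with hI
  have hc : 0 ≤ c := gaussianPDFReal_nonneg 0 1 0
  -- `4 φ(0)² = 2 / π`; the constant `0.637` in `taylor_poly_ineq` is chosen just above it.
  have h4c : 4 * c ^ 2 ≤ 0.637 := by
    rw [sq_gaussianPDFReal_zero_one_zero, mul_inv_le_iff₀ (by positivity)]
    nlinarith [pi_gt_d2]
  have hlo : c * (x - x ^ 3 / 6 + x ^ 5 / 40 - x ^ 7 / 336) ≤ I := by
    linarith [gaussQ_le_half_sub_taylor hx0, hI]
  have hhi : I ≤ c * (x - x ^ 3 / 6 + x ^ 5 / 40) := by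
    linarith [half_sub_taylor_le_gaussQ hx0, hI]
  have hI3 : I ^ 3 ≤ (c * (x - x ^ 3 / 6 + x ^ 5 / 40)) ^ 3 :=
    pow_le_pow_left₀ (by linarith [gaussQ_le_half hx0, hI]) hhi 3
  have hφx : x * φ x ≤ c * (x * (1 - x ^ 2 / 2 + x ^ 4 / 8)) := by
    have := exp_neg_le_one_sub_add_sq_div_two (t := x ^ 2 / 2) (by positivity)
    rw [gaussianPDFReal_zero_one_eq_mul_exp x, neg_div]
    nlinarith [mul_le_mul_of_nonneg_left this (mul_nonneg hx0 hc)]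
  have hP4 : 0 ≤ x - x ^ 3 / 6 + x ^ 5 / 40 := by
    nlinarith [mul_nonneg hx0 (sub_nonneg.2 (pow_le_one₀ hx0 hx1 (n := 2))), pow_nonneg hx0 5]
  have hpoly := mul_le_mul_of_nonneg_left (taylor_poly_ineq hx0 hx1) hc
  have h4c' := mul_le_mul_of_nonneg_right h4c
    (by positivity : 0 ≤ c * ((x - x ^ 3 / 6 + x ^ 5 / 40) ^ 3 * (x ^ 2 + 1)))
  calc x * φ x ≤ c * (x * (1 - x ^ 2 / 2 + x ^ 4 / 8)) := hφx
    _ ≤ (c * (x - x ^ 3 / 6 + x ^ 5 / 40 - x ^ 7 / 336)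
          - 4 * (c * (x - x ^ 3 / 6 + x ^ 5 / 40)) ^ 3) * (x ^ 2 + 1) := by linarith
    _ ≤ (I - 4 * I ^ 3) * (x ^ 2 + 1) := by gcongr
    _ = 2 * (1 - 2 * gaussQ x) * (gaussQ x * (1 - gaussQ x)) * (x ^ 2 + 1) := by ring

lemma mul_gaussianPDFReal_le_of_one_le {x : ℝ} (hx : 1 ≤ x) :
    x * φ x ≤ 2 * (1 - 2 * gaussQ x) * (gaussQ x * (1 - gaussQ x)) * (x ^ 2 + 1) := by
  have hQ : gaussQ x ≤ 1 / 6 := (strictAnti_gaussQ.antitone hx).trans gaussQ_one_le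
  have h := mul_nonneg (mul_nonneg (gaussQ_pos x).le (by positivity : (0 : ℝ) ≤ x ^ 2 + 1))
    (by nlinarith : (0 : ℝ) ≤ 1 - 6 * gaussQ x + 4 * gaussQ x ^ 2)
  nlinarith [mul_gaussianPDFReal_le_gaussQ_mul x]

lemma two_mul_le_log_one_add_sub_log_one_sub {d : ℝ} (h0 : 0 ≤ d) (h1 : d < 1) :
    2 * d ≤ log (1 + d) - log (1 - d) := by
  have h := le_hasSum (hasSum_log_sub_log_of_abs_lt_one (abs_lt.2 ⟨by linarith, h1⟩)) 0
    fun j _ ↦ by positivity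
  simpa using h

noncomputable def gaussLogOdds (x : ℝ) : ℝ := log (1 - gaussQ x) - log (gaussQ x)

lemma hasDerivAt_gaussLogOdds (x : ℝ) :
    HasDerivAt gaussLogOdds (φ x / (gaussQ x * (1 - gaussQ x))) x := by
  have hQ := gaussQ_pos x
  have hQ' : 0 < 1 - gaussQ x := sub_pos.2 (gaussQ_lt_one x)
  exact (((hasDerivAt_gaussQ x).const_sub 1).log hQ'.ne' |>.sub
    ((hasDerivAt_gaussQ x).log hQ.ne')).congr_deriv (by field_simp; ring)

lemma two_mul_one_sub_two_mul_gaussQ_le_gaussLogOdds {x : ℝ} (hx : 0 ≤ x) :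
    2 * (1 - 2 * gaussQ x) ≤ gaussLogOdds x := by
  have hQ := gaussQ_pos x
  have hQ' : 0 < 1 - gaussQ x := sub_pos.2 (gaussQ_lt_one x)
  have h := two_mul_le_log_one_add_sub_log_one_sub (d := 1 - 2 * gaussQ x)
    (by linarith [gaussQ_le_half hx]) (by linarith)
  rw [show 1 + (1 - 2 * gaussQ x) = 2 * (1 - gaussQ x) by ring,
    show 1 - (1 - 2 * gaussQ x) = 2 * gaussQ x by ring,
    log_mul two_ne_zero hQ'.ne', log_mul two_ne_zero hQ.ne'] at h
  unfold gaussLogOdds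
  linarith

lemma mul_gaussianPDFReal_le_gaussLogOdds_mul {x : ℝ} (hx : 0 ≤ x) :
    x * φ x ≤ gaussLogOdds x * (gaussQ x * (1 - gaussQ x)) * (x ^ 2 + 1) := by
  have hQ' : 0 < 1 - gaussQ x := sub_pos.2 (gaussQ_lt_one x)
  have hodds := mul_le_mul_of_nonneg_right (two_mul_one_sub_two_mul_gaussQ_le_gaussLogOdds hx)
    (by have := gaussQ_pos x; positivity : 0 ≤ (gaussQ x * (1 - gaussQ x)) * (x ^ 2 + 1))
  rcases le_total x 1 with hx1 | hx1
  · linarith [mul_gaussianPDFReal_le_of_le_one hx hx1]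
  · linarith [mul_gaussianPDFReal_le_of_one_le hx1]

lemma antitoneOn_gaussLogOdds_mul_div : AntitoneOn (fun x ↦ gaussLogOdds x * φ x / x) (Ioi 0) := by
  have hf : ∀ x ∈ Ioi (0 : ℝ), HasDerivAt (fun x ↦ gaussLogOdds x * φ x / x)
      (φ x / (x ^ 2 * (gaussQ x * (1 - gaussQ x)))
        * (x * φ x - gaussLogOdds x * (gaussQ x * (1 - gaussQ x)) * (x ^ 2 + 1))) x := by
    intro x hx
    have hQ := gaussQ_pos x
    have hQ' : 0 < 1 - gaussQ x := sub_pos.2 (gaussQ_lt_one x)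
    exact (((hasDerivAt_gaussLogOdds x).mul (hasDerivAt_gaussianPDFReal_zero_one x)).div
      (hasDerivAt_id x) (ne_of_gt hx)).congr_deriv
      (by simp only [id, Pi.mul_apply]; field_simp; ring)
  refine antitoneOn_of_hasDerivWithinAt_nonpos (convex_Ioi 0)
    (fun x hx ↦ (hf x hx).continuousAt.continuousWithinAt)
    (fun x hx ↦ (hf x (interior_subset hx)).hasDerivWithinAt) fun x hx ↦ ?_
  rw [interior_Ioi] at hx
  have := gaussQ_pos x
  have := sub_pos.2 (gaussQ_lt_one x)
  have := gaussianPDFReal_nonneg 0 1 x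
  exact mul_nonpos_of_nonneg_of_nonpos (by positivity)
    (sub_nonpos.2 (mul_gaussianPDFReal_le_gaussLogOdds_mul (le_of_lt hx)))

lemma hasDerivAt_binEntropy_gaussQ (t : ℝ) :
    HasDerivAt (fun t ↦ binEntropy (gaussQ t)) (-(gaussLogOdds t * φ t)) t := by
  have hQ := gaussQ_pos t
  exact ((hasDerivAt_binEntropy hQ.ne' (gaussQ_lt_one t).ne).comp t
    (hasDerivAt_gaussQ t)).congr_deriv (by unfold gaussLogOdds; ring)

lemma convexOn_binEntropy_gaussQ_sqrt : ConvexOn ℝ (Ici 0) fun u ↦ binEntropy (gaussQ √u) := by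
  have hf : ∀ u ∈ Ioi (0 : ℝ), HasDerivAt (fun u ↦ binEntropy (gaussQ √u))
      (-(gaussLogOdds √u * φ √u / √u) / 2) u := fun u hu ↦
    ((hasDerivAt_binEntropy_gaussQ √u).comp u (hasDerivAt_sqrt (ne_of_gt hu))).congr_deriv
      (by have := sqrt_pos.2 hu; field_simp)
  refine MonotoneOn.convexOn_of_deriv (convex_Ici 0)
    ((binEntropy_continuous.comp (continuous_gaussQ.comp continuous_sqrt)).continuousOn)
    (fun u hu ↦ (hf u (by rwa [interior_Ici] at hu)).differentiableAt.differentiableWithinAt) ?_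
  rw [interior_Ici]
  intro u hu v hv huv
  rw [(hf u hu).deriv, (hf v hv).deriv]
  have := antitoneOn_gaussLogOdds_mul_div (sqrt_pos.2 hu) (sqrt_pos.2 hv) (sqrt_le_sqrt huv)
  linarith

lemma binEntropy_gaussQ_neg (t : ℝ) : binEntropy (gaussQ (-t)) = binEntropy (gaussQ t) := by
  rw [← one_sub_gaussQ, binEntropy_one_sub]

lemma two_mul_binEntropy_gaussQ_le {p q b : ℝ} (hb : 0 ≤ b) (hpq : p ^ 2 + q ^ 2 = 2 * b ^ 2) :
    2 * binEntropy (gaussQ b) ≤ binEntropy (gaussQ p) + binEntropy (gaussQ q) := by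
  have hsq : ∀ t : ℝ, binEntropy (gaussQ √(t ^ 2)) = binEntropy (gaussQ t) := fun t ↦ by
    rcases abs_choice t with h | h <;> rw [sqrt_sq_eq_abs, h]
    exact binEntropy_gaussQ_neg t
  have h := convexOn_binEntropy_gaussQ_sqrt.2 (sq_nonneg p) (sq_nonneg q)
    (by norm_num : (0 : ℝ) ≤ 1 / 2) (by norm_num : (0 : ℝ) ≤ 1 / 2) (by norm_num)
  simp only [smul_eq_mul, hsq] at h
  rw [show 1 / 2 * p ^ 2 + 1 / 2 * q ^ 2 = b ^ 2 by linarith, sqrt_sq hb] at h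
  linarith

lemma strictAntiOn_binEntropy_gaussQ : StrictAntiOn (fun t ↦ binEntropy (gaussQ t)) (Ici 0) :=
  binEntropy_strictMonoOn.comp_strictAntiOn (strictAnti_gaussQ.strictAntiOn _) fun _ ht ↦
    ⟨(gaussQ_pos _).le, by simpa [one_div] using gaussQ_le_half ht⟩

lemma sum_negMulLog_le_log_card {ι : Type*} [Fintype ι] [Nonempty ι] (q : ι → ℝ)
    (hq₀ : ∀ i, 0 ≤ q i) (hq₁ : ∑ i, q i = 1) :
    ∑ i, negMulLog (q i) ≤ log (Fintype.card ι) := by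
  have hn : (0 : ℝ) < Fintype.card ι := Nat.cast_pos.2 Fintype.card_pos
  have h := concaveOn_negMulLog.le_map_sum (t := Finset.univ) (w := fun _ ↦ (Fintype.card ι : ℝ)⁻¹)
    (p := q) (fun _ _ ↦ by positivity) (by simp [Finset.card_univ, hn.ne'])
    (fun i _ ↦ hq₀ i)
  simp only [smul_eq_mul, ← Finset.mul_sum, hq₁, mul_one] at h
  rwa [negMulLog, log_inv, neg_mul_neg, mul_le_mul_iff_right₀ (inv_pos.2 hn)] at h

lemma eta_eq_negMulLog : eta = negMulLog := rfl

lemma binEnt_eq_binEntropy : binEnt = binEntropy :=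
  funext fun p ↦ (binEntropy_eq_negMulLog_add_negMulLog_one_sub p).symm

lemma sgnb_true : sgnb true = 1 := if_pos rfl

lemma sgnb_false : sgnb false = -1 := if_neg Bool.false_ne_true

lemma sum_p1bitC (w x : ℂ) : ∑ y, p1bitC w x y = 1 := by
  simp only [p1bitC, Fintype.sum_prod_type, Fintype.sum_bool, sgnb_true, sgnb_false,
    neg_mul, one_mul, ← one_sub_gaussQ]
  ring

lemma sum_eta_p1bitC (w x : ℂ) :
    ∑ y, eta (p1bitC w x y) = binEntropy (gaussQ (w * x).re) + binEntropy (gaussQ (w * x).im) := by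
  simp only [p1bitC, Fintype.sum_prod_type, Fintype.sum_bool, sgnb_true, sgnb_false, neg_mul,
    one_mul, eta_eq_negMulLog,
    negMulLog_mul, binEntropy_eq_negMulLog_add_negMulLog_one_sub, ← one_sub_gaussQ]
  ring_nf

noncomputable def unitQpsk (s : Bool × Bool) : ℂ := sgnb s.1 + sgnb s.2 * Complex.I

lemma miUnif4_mul (w a : ℂ) (pts : Bool × Bool → ℂ) :
    miUnif4 w (fun s ↦ a * pts s) = miUnif4 (w * a) pts := by
  simp only [miUnif4, p1bitC, mul_assoc]

lemma sum_eta_p1bitC_unitQpsk (B : ℂ) (s : Bool × Bool) :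
    ∑ y, eta (p1bitC B (unitQpsk s) y)
      = binEntropy (gaussQ (B.re - B.im)) + binEntropy (gaussQ (B.re + B.im)) := by
  rw [sum_eta_p1bitC]
  obtain ⟨_ | _, _ | _⟩ := s <;>
    simp only [unitQpsk, sgnb_true, sgnb_false, Complex.mul_re, Complex.mul_im, Complex.add_re,
      Complex.add_im, Complex.ofReal_re, Complex.ofReal_im, Complex.I_re,
      Complex.I_im]
  · rw [← binEntropy_gaussQ_neg (B.re - B.im), ← binEntropy_gaussQ_neg (B.re + B.im)]; ring_nf
  · rw [← binEntropy_gaussQ_neg (B.re + B.im)]; ring_nf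
  · rw [← binEntropy_gaussQ_neg (B.re - B.im)]; ring_nf
  · ring_nf

lemma miUnif4_unitQpsk (B : ℂ) :
    miUnif4 B unitQpsk = ∑ y, eta (1 / 4 * ∑ s, p1bitC B (unitQpsk s) y)
      - (binEntropy (gaussQ (B.re - B.im)) + binEntropy (gaussQ (B.re + B.im))) := by
  rw [miUnif4, Finset.sum_sub_distrib, ← Finset.mul_sum, Finset.sum_comm]
  simp only [sum_eta_p1bitC_unitQpsk, Finset.sum_const, Finset.card_univ, Fintype.card_prod,
    Fintype.card_bool, nsmul_eq_mul]
  ring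

lemma miUnif4_unitQpsk_le (B : ℂ) :
    miUnif4 B unitQpsk ≤ log 4 - 2 * binEntropy (gaussQ ‖B‖) := by
  have hout : ∑ y, eta (1 / 4 * ∑ s, p1bitC B (unitQpsk s) y) ≤ log 4 := by
    have h := sum_negMulLog_le_log_card (fun y ↦ 1 / 4 * ∑ s, p1bitC B (unitQpsk s) y)
      (fun y ↦ mul_nonneg (by norm_num) (Finset.sum_nonneg fun s _ ↦
        mul_nonneg (gaussQ_pos _).le (gaussQ_pos _).le))
      (by rw [← Finset.mul_sum, Finset.sum_comm]; simp [sum_p1bitC])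
    simpa [eta_eq_negMulLog] using h
  have hcond := two_mul_binEntropy_gaussQ_le (p := B.re - B.im) (q := B.re + B.im) (norm_nonneg B)
    (by rw [Complex.sq_norm, Complex.normSq_apply]; ring)
  rw [miUnif4_unitQpsk]
  linarith

lemma miUnif4_ofReal_unitQpsk (a : ℝ) :
    miUnif4 a unitQpsk = log 4 - 2 * binEntropy (gaussQ a) := by
  have hunif : ∀ y, ∑ s, p1bitC a (unitQpsk s) y = 1 := by
    rintro ⟨_ | _, _ | _⟩ <;>
      simp only [p1bitC, unitQpsk, Fintype.sum_prod_type, Fintype.sum_bool, sgnb_true, sgnb_false,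
        Complex.mul_re, Complex.mul_im, Complex.add_re, Complex.add_im, Complex.ofReal_re,
        Complex.ofReal_im, Complex.I_re, Complex.I_im] <;> norm_num [← one_sub_gaussQ] <;> ring
  rw [miUnif4_unitQpsk]
  simp only [hunif, Complex.ofReal_re, Complex.ofReal_im, sub_zero, add_zero, Finset.sum_const,
    Finset.card_univ, Fintype.card_prod, Fintype.card_bool, nsmul_eq_mul, eta, mul_one, one_div,
    log_inv]
  push_cast
  ring

lemma mul_exp_neg_arg_mul_I (z : ℂ) :
    z * Complex.exp (-(Complex.arg z : ℂ) * Complex.I) = (‖z‖ : ℂ) := by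
  conv_lhs => arg 1; rw [← Complex.norm_mul_exp_arg_mul_I z]
  rw [mul_assoc, ← Complex.exp_add, neg_mul, add_neg_cancel, Complex.exp_zero, mul_one]

theorem qpsk_positive_secrecy_general (w₁ w₂ : ℂ)
    (hgt : ‖w₂‖ < ‖w₁‖) (J : ℝ) (hJ : 0 < J) :
    2 * (binEnt (gaussQ (‖w₂‖ * Real.sqrt (J / 2)))
          - binEnt (gaussQ (‖w₁‖ * Real.sqrt (J / 2))))
        ≤ miUnif4 w₁ (qpskPts w₁ J) - miUnif4 w₂ (qpskPts w₁ J) ∧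
      0 < 2 * (binEnt (gaussQ (‖w₂‖ * Real.sqrt (J / 2)))
          - binEnt (gaussQ (‖w₁‖ * Real.sqrt (J / 2)))) := by
  set c := √(J / 2)
  set u : ℂ := c * Complex.exp (-(Complex.arg w₁ : ℂ) * Complex.I)
  have hpts : qpskPts w₁ J = fun s ↦ u * unitQpsk s := rfl
  have hc : 0 < c := sqrt_pos.2 (by positivity)
  have hu₁ : w₁ * u = ((‖w₁‖ * c : ℝ) : ℂ) := by
    rw [mul_left_comm, mul_exp_neg_arg_mul_I]; push_cast; ring
  have hu₂ : ‖w₂ * u‖ = ‖w₂‖ * c := by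
    rw [norm_mul, norm_mul, Complex.norm_exp]
    simp [abs_of_pos hc]
  have hI₁ : miUnif4 w₁ (qpskPts w₁ J) = log 4 - 2 * binEntropy (gaussQ (‖w₁‖ * c)) := by
    rw [hpts, miUnif4_mul, hu₁, miUnif4_ofReal_unitQpsk]
  have hI₂ : miUnif4 w₂ (qpskPts w₁ J) ≤ log 4 - 2 * binEntropy (gaussQ (‖w₂‖ * c)) := by
    rw [hpts, miUnif4_mul, ← hu₂]
    exact miUnif4_unitQpsk_le _
  have hgap : binEntropy (gaussQ (‖w₁‖ * c)) < binEntropy (gaussQ (‖w₂‖ * c)) :=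
    strictAntiOn_binEntropy_gaussQ (mem_Ici.2 (by positivity)) (mem_Ici.2 (by positivity))
      (mul_lt_mul_of_pos_right hgt hc)
  rw [binEnt_eq_binEntropy]
  constructor <;> linarith

/-- Appendix: for the complex Gaussian wiretap channel with per-component one-bit ADCs
at both receivers and `|w₁| > |w₂|`, the QPSK rotated by `-arg w₁` with power `J`
achieves `I₁ - I₂ ≥ 2(h(Q(|w₂|√(J/2))) - h(Q(|w₁|√(J/2)))) > 0`. -/
theorem qpsk_positive_secrecy (w₁ w₂ : ℂ) (hw₁ : w₁ ≠ 0) (hw₂ : w₂ ≠ 0)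
    (hgt : ‖w₂‖ < ‖w₁‖) (J : ℝ) (hJ : 0 < J) :
    2 * (binEnt (gaussQ (‖w₂‖ * Real.sqrt (J / 2)))
          - binEnt (gaussQ (‖w₁‖ * Real.sqrt (J / 2))))
        ≤ miUnif4 w₁ (qpskPts w₁ J) - miUnif4 w₂ (qpskPts w₁ J) ∧
      0 < 2 * (binEnt (gaussQ (‖w₂‖ * Real.sqrt (J / 2)))
          - binEnt (gaussQ (‖w₁‖ * Real.sqrt (J / 2)))) :=
  qpsk_positive_secrecy_general w₁ w₂ hgt J hJ
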